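/- arXiv:math/0311522 — 2 statements merged into one kernel-verified Lean document; each statement's English description precedes it below -/
import Mathlib

section
/- Let R be an H-module algebra and E a non-empty subset of R. Then the H-ideal of R generated by E equals H·E + R(H·E) + (H·E)R + R(H·E)R. -/
open scoped TensorProduct

class HModAlg (k H R : Type*) [CommRing k] [Ring H] [Algebra k H]
    [Coalgebra k H] [NonUnitalRing R] [Module k R]
    [SMulCommClass k R R] [IsScalarTower k R R] where
  hsmul : H →ₗ[k] R →ₗ[k] R
  one_hsmul : ∀ r : R, hsmul 1 r = r
  mul_hsmul : ∀ (h h' : H) (r : R), hsmul (h * h') r = hsmul h (hsmul h' r)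
  hsmul_mul : ∀ (h : H) (a b : R),
    hsmul h (a * b) =
      LinearMap.mul' k R
        (TensorProduct.map (hsmul.flip a) (hsmul.flip b) (Coalgebra.comul h))

/-- product f 0 * f 1 * ⋯ * f n -/
def prodSeq {R : Type*} [Mul R] (f : ℕ → R) : ℕ → R
  | 0 => f 0
  | n + 1 => prodSeq f n * f (n + 1)

/-- `I` is a nilpotent subset: some power of it vanishes. -/
def IsNilpotentSet {R : Type*} [Mul R] [Zero R] (I : Set R) : Prop :=
  ∃ n : ℕ, ∀ f : ℕ → R, (∀ i, f i ∈ I) → prodSeq f n = 0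

/-- `I` is nilpotent modulo `J`. -/
def IsNilpotentSetMod {R : Type*} [Mul R] (I J : Set R) : Prop :=
  ∃ n : ℕ, ∀ f : ℕ → R, (∀ i, f i ∈ I) → prodSeq f n ∈ J

section Defs

variable (k H : Type*) {R : Type*} [CommRing k] [Ring H] [Algebra k H]
  [Coalgebra k H] [NonUnitalRing R] [Module k R]
  [SMulCommClass k R R] [IsScalarTower k R R] [HModAlg k H R]

/-- The action of `h : H` on `r : R`. -/
def hact (h : H) (r : R) : R := HModAlg.hsmul (k := k) h r

/-- `I` is an `H`-ideal of the `H`-module (sub)algebra `B ⊆ R`. -/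
structure IsHIdealIn (B I : Set R) : Prop where
  subset : I ⊆ B
  zero_mem : (0 : R) ∈ I
  add_mem : ∀ {x y : R}, x ∈ I → y ∈ I → x + y ∈ I
  neg_mem : ∀ {x : R}, x ∈ I → -x ∈ I
  mul_mem_left : ∀ {x : R}, x ∈ B → ∀ {y : R}, y ∈ I → x * y ∈ I
  mul_mem_right : ∀ {x : R}, x ∈ I → ∀ {y : R}, y ∈ B → x * y ∈ I
  hsmul_mem : ∀ (h : H) {x : R}, x ∈ I → hact k H h x ∈ I

/-- `I` is an `H`-ideal of `R`. -/
def IsHIdeal (I : Set R) : Prop := IsHIdealIn k H Set.univ I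

/-- `R` is `H`-semiprime. -/
def IsHSemiprime : Prop :=
  ∀ I : Set R, IsHIdeal k H I → IsNilpotentSet I → I = {0}

/-- The subalgebra `B` of `R` is `H`-semiprime. -/
def IsHSemiprimeIn (B : Set R) : Prop :=
  ∀ I : Set R, IsHIdealIn k H B I → IsNilpotentSet I → I = {0}

/-- `R` is `H`-prime. -/
def IsHPrime : Prop :=
  ∀ I J : Set R, IsHIdeal k H I → IsHIdeal k H J →
    (∀ a ∈ I, ∀ b ∈ J, a * b = 0) → I = {0} ∨ J = {0}

/-- The `H`-ideal of `R` generated by `E`. -/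
def genHIdeal (E : Set R) : Set R := ⋂₀ {I : Set R | IsHIdeal k H I ∧ E ⊆ I}

end Defs

/-!
The two-sided ideal spanned by the orbit `S = H·E` is already an `H`-ideal, hence the `H`-ideal
generated by `E`: since `h·(ab) = ∑ (h₁·a)(h₂·b)`, the elements `x` with `H·x` inside it form a
two-sided ideal containing `S`. Being `H`-stable it is closed under the scalars `c = c·1_H`, and as
an additive group it is generated by `S ∪ RS ∪ SR ∪ RSR`, so it is the `k`-span of that set.
-/

open scoped Pointwise

section HAction

variable {k H R : Type*} [CommRing k] [Ring H] [Algebra k H] [Coalgebra k H]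
  [NonUnitalRing R] [Module k R] [SMulCommClass k R R] [IsScalarTower k R R] [HModAlg k H R]

lemma hact_one (r : R) : hact k H (1 : H) r = r := HModAlg.one_hsmul r

lemma hact_mul (h h' : H) (r : R) : hact k H (h * h') r = hact k H h (hact k H h' r) :=
  HModAlg.mul_hsmul h h' r

lemma hact_algebraMap (c : k) (r : R) : hact k H (algebraMap k H c) r = c • r := by
  rw [hact, Algebra.algebraMap_eq_smul_one, map_smul, LinearMap.smul_apply, HModAlg.one_hsmul]

lemma hact_zero (h : H) : hact k H h (0 : R) = 0 := map_zero _

lemma hact_add (h : H) (a b : R) : hact k H h (a + b) = hact k H h a + hact k H h b :=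
  map_add _ a b

lemma hact_neg (h : H) (a : R) : hact k H h (-a) = -hact k H h a := map_neg _ a

lemma hact_mul_mem {S : Type*} [SetLike S R] [AddSubmonoidClass S R] {M : S} (h : H) {a b : R}
    (hab : ∀ x y : H, hact k H x a * hact k H y b ∈ M) : hact k H h (a * b) ∈ M := by
  rw [hact, HModAlg.hsmul_mul]
  induction Coalgebra.comul (R := k) h using TensorProduct.induction_on with
  | zero => simp
  | tmul x y => simpa [hact] using hab x y
  | add u v hu hv => rw [map_add, map_add]; exact add_mem hu hv

namespace TwoSidedIdeal

lemma hact_mem_span {S : Set R} (hS : ∀ (h : H), ∀ s ∈ S, hact k H h s ∈ S)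
    (h : H) {x : R} (hx : x ∈ span S) : hact k H h x ∈ span S := by
  induction hx using span_induction generalizing h with
  | mem s hs => exact subset_span (hS h s hs)
  | zero => rw [hact_zero]; exact zero_mem _
  | add a b _ _ ha hb => rw [hact_add]; exact add_mem _ (ha h) (hb h)
  | neg a _ ha => rw [hact_neg]; exact neg_mem _ (ha h)
  | left_absorb a x _ hx => exact hact_mul_mem h fun _ y => mul_mem_left _ _ _ (hx y)
  | right_absorb b x _ hx => exact hact_mul_mem h fun y _ => mul_mem_right _ _ _ (hx y)

lemma isHIdeal {I : TwoSidedIdeal R} (hI : ∀ (h : H), ∀ x ∈ I, hact k H h x ∈ I) :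
    IsHIdeal k H (I : Set R) where
  subset := Set.subset_univ _
  zero_mem := I.zero_mem
  add_mem := I.add_mem
  neg_mem := I.neg_mem
  mul_mem_left _ _ hy := I.mul_mem_left _ _ hy
  mul_mem_right hx _ _ := I.mul_mem_right _ _ hx
  hsmul_mem h x hx := hI h x hx

lemma coe_span_eq_submoduleSpan {S : Set R} (hS : ∀ (h : H), ∀ s ∈ S, hact k H h s ∈ S) :
    (span S : Set R) =
      Submodule.span k (S ∪ Set.univ * S ∪ S * Set.univ ∪ Set.univ * S * Set.univ) := by
  rw [Set.union_right_comm S]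
  ext x
  constructor
  · intro hx
    rw [SetLike.mem_coe, mem_span_iff_mem_addSubgroup_closure_nonunital] at hx
    exact (AddSubgroup.closure_le (K := (Submodule.span k _).toAddSubgroup)).2
      (fun y hy => Submodule.subset_span hy) hx
  · intro hx
    induction hx using Submodule.span_induction with
    | mem y hy =>
      rcases hy with ((hy | hy) | hy) | hy
      · exact subset_span hy
      · exact subset_mul_set subset_span _ hy
      · exact set_mul_subset subset_span _ hy
      · exact subset_mul_set (set_mul_subset subset_span _) _ hy
    | zero => exact zero_mem _
    | add _ _ _ _ ha hb => exact add_mem _ ha hb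
    | smul c y _ hy =>
      rw [← hact_algebraMap (H := H)]
      exact hact_mem_span hS _ hy

end TwoSidedIdeal

end HAction

section HOrbit

variable {k H R : Type*} [CommRing k] [Ring H] [Algebra k H] [Coalgebra k H]
  [NonUnitalRing R] [Module k R] [SMulCommClass k R R] [IsScalarTower k R R] [HModAlg k H R]

variable (k H) in
def hOrbit (E : Set R) : Set R := {x | ∃ h : H, ∃ e ∈ E, x = hact k H h e}

lemma hact_mem_hOrbit {E : Set R} (h : H) : ∀ s ∈ hOrbit k H E, hact k H h s ∈ hOrbit k H E := by
  rintro _ ⟨h', e, he, rfl⟩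
  exact ⟨h * h', e, he, (hact_mul h h' e).symm⟩

lemma subset_hOrbit (E : Set R) : E ⊆ hOrbit k H E := fun e he => ⟨1, e, he, (hact_one e).symm⟩

lemma IsHIdeal.span_hOrbit_subset {E I : Set R} (hI : IsHIdeal k H I) (hEI : E ⊆ I) :
    (TwoSidedIdeal.span (hOrbit k H E) : Set R) ⊆ I := by
  intro x hx
  induction hx using TwoSidedIdeal.span_induction with
  | mem _ hs => obtain ⟨h, e, he, rfl⟩ := hs; exact hI.hsmul_mem h (hEI he)
  | zero => exact hI.zero_mem
  | add _ _ _ _ ha hb => exact hI.add_mem ha hb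
  | neg _ _ ha => exact hI.neg_mem ha
  | left_absorb _ _ _ hx => exact hI.mul_mem_left trivial hx
  | right_absorb _ _ _ hx => exact hI.mul_mem_right hx trivial

lemma genHIdeal_eq_span_hOrbit (E : Set R) :
    genHIdeal k H E = TwoSidedIdeal.span (hOrbit k H E) := by
  refine Set.Subset.antisymm (Set.sInter_subset_of_mem ?_)
    (Set.subset_sInter fun _ ⟨hI, hEI⟩ => hI.span_hOrbit_subset hEI)
  exact ⟨TwoSidedIdeal.isHIdeal fun h _ => TwoSidedIdeal.hact_mem_span hact_mem_hOrbit h,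
    (subset_hOrbit E).trans TwoSidedIdeal.subset_span⟩

end HOrbit

theorem stmt1_general {k H R : Type*} [CommRing k] [Ring H] [Algebra k H] [Coalgebra k H]
    [NonUnitalRing R] [Module k R] [SMulCommClass k R R] [IsScalarTower k R R]
    [HModAlg k H R] (E : Set R) :
    genHIdeal k H E =
      ↑(Submodule.span k
        ({x : R | ∃ h : H, ∃ e ∈ E, x = hact k H h e} ∪
         {x : R | ∃ h : H, ∃ e ∈ E, ∃ r : R, x = r * hact k H h e} ∪
         {x : R | ∃ h : H, ∃ e ∈ E, ∃ r : R, x = hact k H h e * r} ∪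
         {x : R | ∃ h : H, ∃ e ∈ E, ∃ r s : R, x = r * hact k H h e * s})) := by
  rw [genHIdeal_eq_span_hOrbit, TwoSidedIdeal.coe_span_eq_submoduleSpan hact_mem_hOrbit]
  congr 3
  all_goals ext x; simp [hOrbit, Set.mem_mul]; aesop

/-- the `H`-ideal generated by a non-empty set `E` equals
`H·E + R(H·E) + (H·E)R + R(H·E)R`. -/
theorem stmt1 {k H R : Type*} [CommRing k] [Ring H] [Algebra k H] [Coalgebra k H]
    [NonUnitalRing R] [Module k R] [SMulCommClass k R R] [IsScalarTower k R R]
    [HModAlg k H R] (E : Set R) (hE : E.Nonempty) :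
    genHIdeal k H E =
      ↑(Submodule.span k
        ({x : R | ∃ h : H, ∃ e ∈ E, x = hact k H h e} ∪
         {x : R | ∃ h : H, ∃ e ∈ E, ∃ r : R, x = r * hact k H h e} ∪
         {x : R | ∃ h : H, ∃ e ∈ E, ∃ r : R, x = hact k H h e * r} ∪
         {x : R | ∃ h : H, ∃ e ∈ E, ∃ r s : R, x = r * hact k H h e * s})) :=
  stmt1_general E
end

section
/- Let M be an R-H-BM-module. Then (0:M)_R is a maximal H-ideal of R, and R/(0:M)_R is an H-simple module algebra with unit. -/
/-!
Applied to `R` itself, the BM condition gives `u ∈ R` acting as the identity on `M`; it is an identity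
of `R` modulo `(0:M)_R`, and `u² ∉ (0:M)_R` because `RM ≠ 0`. Applied to an `H`-ideal `J` strictly
above `(0:M)_R`, it gives `v ∈ J` acting as the identity, so every `a = v a + (a - v a)` lies in
`J + (0:M)_R = J`.
-/

open scoped TensorProduct

/-- The `H`-action on `R` as a bundled linear map. -/
def hactL (k H R : Type*) [CommRing k] [Ring H] [Algebra k H] [Coalgebra k H]
    [NonUnitalRing R] [Module k R] [SMulCommClass k R R] [IsScalarTower k R R]
    [HModAlg k H R] : H →ₗ[k] R →ₗ[k] R := HModAlg.hsmul

/-- A (bundled) `R`-`H`-module: a left `R`-module which is a unital left `H`-module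
satisfying `h(am) = Σ (h₁·a)(h₂ m)`. -/
structure RHMod (k H R : Type*) [CommRing k] [Ring H] [Algebra k H] [Coalgebra k H]
    [NonUnitalRing R] [Module k R] [SMulCommClass k R R] [IsScalarTower k R R]
    [HModAlg k H R] where
  M : Type*
  [addgrp : AddCommGroup M]
  [mod : Module k M]
  rsmul : R →ₗ[k] M →ₗ[k] M
  rsmul_mul : ∀ (a b : R) (m : M), rsmul (a * b) m = rsmul a (rsmul b m)
  hsmulM : H →ₗ[k] M →ₗ[k] M
  one_hsmulM : ∀ m : M, hsmulM 1 m = m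
  mul_hsmulM : ∀ (h h' : H) (m : M), hsmulM (h * h') m = hsmulM h (hsmulM h' m)
  compat : ∀ (h : H) (a : R) (m : M),
    hsmulM h (rsmul a m) =
      TensorProduct.lift rsmul
        (TensorProduct.map ((hactL k H R).flip a) (hsmulM.flip m) (Coalgebra.comul h))

attribute [instance] RHMod.addgrp RHMod.mod

namespace RHMod

variable {k H R : Type*} [CommRing k] [Ring H] [Algebra k H] [Coalgebra k H]
  [NonUnitalRing R] [Module k R] [SMulCommClass k R R] [IsScalarTower k R R]
  [HModAlg k H R] (S : RHMod k H R)

/-- The annihilator `(0:M)_R` of the `R`-`H`-module. -/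
def ann : Set R := {a : R | ∀ m : S.M, S.rsmul a m = 0}

/-- `M` is an `R`-`H`-prime module. -/
def IsPrime : Prop :=
  (∃ (a : R) (m : S.M), S.rsmul a m ≠ 0) ∧
    ∀ (x : S.M) (I : Set R), IsHIdeal k H I →
      (∀ a ∈ I, ∀ h : H, S.rsmul a (S.hsmulM h x) = 0) → x = 0 ∨ I ⊆ S.ann

/-- `M` is a faithful `R`-`H`-module. -/
def Faithful : Prop := S.ann = {0}

end RHMod

/-- `M` is an `R`-`H`-`BM`-module. -/
def RHMod.IsBM {k H R : Type*} [CommRing k] [Ring H] [Algebra k H] [Coalgebra k H]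
    [NonUnitalRing R] [Module k R] [SMulCommClass k R R] [IsScalarTower k R R]
    [HModAlg k H R] (S : RHMod k H R) : Prop :=
  (∃ (a : R) (m : S.M), S.rsmul a m ≠ 0) ∧
    ∀ I : Set R, IsHIdeal k H I → ¬ I ⊆ S.ann →
      ∃ u ∈ I, ∀ m : S.M, S.rsmul u m = m

namespace RHMod

variable {k H R : Type*} [CommRing k] [Ring H] [Algebra k H] [Coalgebra k H]
  [NonUnitalRing R] [Module k R] [SMulCommClass k R R] [IsScalarTower k R R]
  [HModAlg k H R] {S : RHMod k H R}

theorem isHIdeal_univ : IsHIdeal k H (Set.univ : Set R) := by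
  constructor <;> intros <;> trivial

theorem ann_ne_univ_of_rsmul_ne_zero {a : R} {m : S.M} (h : S.rsmul a m ≠ 0) :
    S.ann ≠ Set.univ :=
  fun hann => h ((hann ▸ Set.mem_univ a : a ∈ S.ann) m)

section IdentityElement

variable {u : R}

theorem left_mul_sub_mem_ann (hu : ∀ m : S.M, S.rsmul u m = m) (a : R) :
    u * a - a ∈ S.ann := fun m => by
  rw [map_sub, LinearMap.sub_apply, S.rsmul_mul, hu, sub_self]

theorem right_mul_sub_mem_ann (hu : ∀ m : S.M, S.rsmul u m = m) (a : R) :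
    a * u - a ∈ S.ann := fun m => by
  rw [map_sub, LinearMap.sub_apply, S.rsmul_mul, hu, sub_self]

theorem mul_self_notMem_ann (hu : ∀ m : S.M, S.rsmul u m = m) {a : R} {m : S.M}
    (ham : S.rsmul a m ≠ 0) : u * u ∉ S.ann := fun huu => by
  have h := huu (S.rsmul a m)
  rw [S.rsmul_mul, hu, hu] at h
  exact ham h

theorem eq_univ_of_ann_subset_of_mem (hu : ∀ m : S.M, S.rsmul u m = m) {J : Set R}
    (hJ : IsHIdeal k H J) (hann : S.ann ⊆ J) (huJ : u ∈ J) : J = Set.univ := by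
  refine Set.eq_univ_of_forall fun a => ?_
  have h := hJ.add_mem (hJ.mul_mem_right huJ (Set.mem_univ a))
    (hJ.neg_mem (hann (left_mul_sub_mem_ann hu a)))
  rwa [neg_sub, add_sub_cancel] at h

end IdentityElement

namespace IsBM

theorem ann_ne_univ (hS : S.IsBM) : S.ann ≠ Set.univ := by
  obtain ⟨a, m, ham⟩ := hS.1
  exact ann_ne_univ_of_rsmul_ne_zero ham

theorem exists_forall_rsmul_eq (hS : S.IsBM) : ∃ u : R, ∀ m : S.M, S.rsmul u m = m := by
  obtain ⟨u, -, hu⟩ :=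
    hS.2 Set.univ isHIdeal_univ fun h => hS.ann_ne_univ (Set.eq_univ_of_univ_subset h)
  exact ⟨u, hu⟩

theorem eq_ann_or_eq_univ (hS : S.IsBM) {J : Set R} (hJ : IsHIdeal k H J)
    (hann : S.ann ⊆ J) : J = S.ann ∨ J = Set.univ := by
  by_cases hJann : J ⊆ S.ann
  · exact Or.inl (hJann.antisymm hann)
  · obtain ⟨v, hvJ, hv⟩ := hS.2 J hJ hJann
    exact Or.inr (eq_univ_of_ann_subset_of_mem hv hJ hann hvJ)

theorem exists_mul_notMem_ann (hS : S.IsBM) : ∃ a b : R, a * b ∉ S.ann := by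
  obtain ⟨u, hu⟩ := hS.exists_forall_rsmul_eq
  obtain ⟨a, m, ham⟩ := hS.1
  exact ⟨u, u, mul_self_notMem_ann hu ham⟩

end IsBM

end RHMod

/-- if `M` is an `R`-`H`-`BM`-module then `(0:M)_R` is a maximal
`H`-ideal and `R/(0:M)_R` is an `H`-simple module algebra with unit. -/
theorem stmt17 {k H R : Type*} [Field k] [Ring H] [HopfAlgebra k H]
    [NonUnitalRing R] [Module k R] [SMulCommClass k R R] [IsScalarTower k R R]
    [HModAlg k H R] (S : RHMod k H R) (hS : S.IsBM) :
    S.ann ≠ Set.univ ∧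
    (∀ J : Set R, IsHIdeal k H J → S.ann ⊆ J → J = S.ann ∨ J = Set.univ) ∧
    (∃ a b : R, a * b ∉ S.ann) ∧
    (∃ u : R, ∀ a : R, u * a - a ∈ S.ann ∧ a * u - a ∈ S.ann) := by
  obtain ⟨u, hu⟩ := hS.exists_forall_rsmul_eq
  exact ⟨hS.ann_ne_univ, fun _ => hS.eq_ann_or_eq_univ, hS.exists_mul_notMem_ann,
    u, fun a => ⟨RHMod.left_mul_sub_mem_ann hu a, RHMod.right_mul_sub_mem_ann hu a⟩⟩
end
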